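/- arXiv:1101.2818 — 6 statements merged into one kernel-verified Lean document; each statement's English description precedes it below -/
import Mathlib

section
/- Let S be a regular Γ-semigroup and Q a non-empty set. Then for every Q-fuzzy right ideal μ₁ and every Q-fuzzy left ideal μ₂ of S, μ₁ ∘ μ₂ = μ₁ ∩ μ₂. -/
/-- Composition of two Q-fuzzy subsets of a Γ-semigroup. -/
noncomputable def fcomp {S Γ Q : Type*} (mul : S → Γ → S → S)
    (μ₁ μ₂ : S → Q → ℝ) (x : S) (q : Q) : ℝ :=
  sSup {r : ℝ | ∃ (u : S) (γ : Γ) (v : S), x = mul u γ v ∧ r = min (μ₁ u q) (μ₂ v q)}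

/-- if S is a regular Γ-semigroup then μ₁ ∘ μ₂ = μ₁ ∩ μ₂ for every
Q-fuzzy right ideal μ₁ and every Q-fuzzy left ideal μ₂ of S. -/
theorem stmt_8 {S Γ Q : Type*} [Nonempty S] [Nonempty Γ] [Nonempty Q]
    (mul : S → Γ → S → S)
    (assoc : ∀ (x : S) (β : Γ) (y : S) (γ : Γ) (z : S),
      mul (mul x β y) γ z = mul x β (mul y γ z))
    (hreg : ∀ x : S, ∃ β : Γ, x = mul x β x)
    (μ₁ μ₂ : S → Q → ℝ)
    (h₁0 : ∀ x q, 0 ≤ μ₁ x q) (h₁1 : ∀ x q, μ₁ x q ≤ 1)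
    (h₂0 : ∀ x q, 0 ≤ μ₂ x q) (h₂1 : ∀ x q, μ₂ x q ≤ 1)
    (hr : ∀ (x y : S) (γ : Γ) (q : Q), μ₁ x q ≤ μ₁ (mul x γ y) q)
    (hl : ∀ (x y : S) (γ : Γ) (q : Q), μ₂ y q ≤ μ₂ (mul x γ y) q) :
    ∀ (x : S) (q : Q), fcomp mul μ₁ μ₂ x q = min (μ₁ x q) (μ₂ x q) := by
  intro x q
  obtain ⟨β, hβ⟩ := hreg x
  have hmem : min (μ₁ x q) (μ₂ x q) ∈
      {r : ℝ | ∃ (u : S) (γ : Γ) (v : S), x = mul u γ v ∧ r = min (μ₁ u q) (μ₂ v q)} :=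
    ⟨x, β, x, hβ, rfl⟩
  apply le_antisymm
  · apply csSup_le ⟨_, hmem⟩
    rintro r ⟨u, γ, v, hx, rfl⟩
    exact le_min (le_trans (min_le_left _ _) (hx ▸ hr u v γ q))
      (le_trans (min_le_right _ _) (hx ▸ hl u v γ q))
  · apply le_csSup _ hmem
    exact ⟨1, by rintro r ⟨u, γ, v, hx, rfl⟩; exact le_trans (min_le_left _ _) (h₁1 u q)⟩
end

section
/- Let S be a Γ-semigroup and Q a non-empty set. If μ₁ ∘ μ₂ = μ₁ ∩ μ₂ for every Q-fuzzy right ideal μ₁ and every Q-fuzzy left ideal μ₂ of S, then for every right ideal R and every left ideal L of S, R ∩ L = RΓL. -/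
/-- if μ₁ ∘ μ₂ = μ₁ ∩ μ₂ for every Q-fuzzy right ideal μ₁ and every
Q-fuzzy left ideal μ₂ of S, then R ∩ L = RΓL for every right ideal R and every
left ideal L of S. -/
theorem stmt_9 {S Γ Q : Type*} [Nonempty S] [Nonempty Γ] [Nonempty Q]
    (mul : S → Γ → S → S)
    (assoc : ∀ (x : S) (β : Γ) (y : S) (γ : Γ) (z : S),
      mul (mul x β y) γ z = mul x β (mul y γ z))
    (H : ∀ μ₁ μ₂ : S → Q → ℝ,
      (∀ x q, 0 ≤ μ₁ x q) → (∀ x q, μ₁ x q ≤ 1) →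
      (∀ x q, 0 ≤ μ₂ x q) → (∀ x q, μ₂ x q ≤ 1) →
      (∀ (x y : S) (γ : Γ) (q : Q), μ₁ x q ≤ μ₁ (mul x γ y) q) →
      (∀ (x y : S) (γ : Γ) (q : Q), μ₂ y q ≤ μ₂ (mul x γ y) q) →
      ∀ (x : S) (q : Q), fcomp mul μ₁ μ₂ x q = min (μ₁ x q) (μ₂ x q)) :
    ∀ R L : Set S, R.Nonempty → L.Nonempty →
      (∀ (a : S) (γ : Γ) (s : S), a ∈ R → mul a γ s ∈ R) →
      (∀ (s : S) (γ : Γ) (a : S), a ∈ L → mul s γ a ∈ L) →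
      R ∩ L = {x : S | ∃ r ∈ R, ∃ γ : Γ, ∃ l ∈ L, x = mul r γ l} := by
  intro R L _hR _hL hRight hLeft
  classical
  set μ₁ : S → Q → ℝ := fun x _ => if x ∈ R then 1 else 0 with hμ₁
  set μ₂ : S → Q → ℝ := fun x _ => if x ∈ L then 1 else 0 with hμ₂
  have key := H μ₁ μ₂
    (fun x q => by simp only [hμ₁]; split <;> norm_num)
    (fun x q => by simp only [hμ₁]; split <;> norm_num)
    (fun x q => by simp only [hμ₂]; split <;> norm_num)
    (fun x q => by simp only [hμ₂]; split <;> norm_num)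
    (fun x y γ q => by
      simp only [hμ₁]
      by_cases hx : x ∈ R
      · simp [hx, hRight x γ y hx]
      · simp [hx]; split <;> norm_num)
    (fun x y γ q => by
      simp only [hμ₂]
      by_cases hy : y ∈ L
      · simp [hy, hLeft x γ y hy]
      · simp [hy]; split <;> norm_num)
  ext x
  constructor
  · rintro ⟨hxR, hxL⟩
    obtain ⟨q⟩ := ‹Nonempty Q›
    have h1 : fcomp mul μ₁ μ₂ x q = 1 := by
      rw [key x q]; simp [hμ₁, hμ₂, hxR, hxL]
    have hne : {r : ℝ | ∃ (u : S) (γ : Γ) (v : S),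
        x = mul u γ v ∧ r = min (μ₁ u q) (μ₂ v q)}.Nonempty := by
      by_contra hemp
      rw [Set.not_nonempty_iff_eq_empty] at hemp
      rw [fcomp, hemp, Real.sSup_empty] at h1
      norm_num at h1
    have hlt : (1 : ℝ) / 2 < fcomp mul μ₁ μ₂ x q := by rw [h1]; norm_num
    obtain ⟨r, hr, hr2⟩ := exists_lt_of_lt_csSup hne hlt
    obtain ⟨u, γ, v, hx, hrval⟩ := hr
    have hu : u ∈ R := by
      by_contra hu
      simp [hμ₁, hu] at hrval
      rw [hrval] at hr2
      simp at hr2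
      linarith [hr2.1]
    have hv : v ∈ L := by
      by_contra hv
      simp [hμ₂, hv] at hrval
      rw [hrval] at hr2
      simp at hr2
      linarith [hr2.2]
    exact ⟨u, hu, γ, v, hv, hx⟩
  · rintro ⟨r, hr, γ, l, hl, rfl⟩
    exact ⟨hRight r γ l hr, hLeft r γ l hl⟩
end

section
/- Let S be a Γ-semigroup with unities, L its left operator semigroup, Q a non-empty set, and σ a Q-fuzzy ideal of S. Then (σ⁺′)⁺ = σ, where σ⁺′([a,α],q) = inf over s∈S of σ(aαs,q) and δ⁺(a,q) = inf over γ∈Γ of δ([a,γ],q). -/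
/-- if S is a Γ-semigroup with a right unity [γ₀,f] and σ is a
Q-fuzzy ideal of S, then (σ⁺′)⁺ = σ. -/
theorem stmt_12 {S Γ Q L : Type*} [Nonempty S] [Nonempty Γ] [Nonempty Q]
    (smul : S → Γ → S → S)
    (assoc1 : ∀ (a : S) (α : Γ) (b : S) (β : Γ) (c : S),
      smul (smul a α b) β c = smul a α (smul b β c))
    (clsL : S → Γ → L) (mulL : L → L → L)
    (hmul : ∀ (x : S) (α : Γ) (y : S) (β : Γ),
      mulL (clsL x α) (clsL y β) = clsL (smul x α y) β)
    (γ0 : Γ) (f : S) (hru : ∀ s : S, smul s γ0 f = s)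
    (σ : S → Q → ℝ) (h0 : ∀ x q, 0 ≤ σ x q) (h1 : ∀ x q, σ x q ≤ 1)
    (hid : ∀ (x y : S) (γ : Γ) (q : Q), max (σ x q) (σ y q) ≤ σ (smul x γ y) q)
    (splus' : L → Q → ℝ)
    (hspec : ∀ (x : S) (α : Γ) (q : Q),
      splus' (clsL x α) q = ⨅ s : S, σ (smul x α s) q) :
    ∀ (a : S) (q : Q), (⨅ γ : Γ, splus' (clsL a γ) q) = σ a q := by
  intro a q
  have hge : ∀ γ : Γ, σ a q ≤ splus' (clsL a γ) q := by
    intro γ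
    rw [hspec]
    refine le_ciInf fun s => ?_
    exact le_trans (le_max_left _ _) (hid a s γ q)
  have hbdd : BddBelow (Set.range fun γ : Γ => splus' (clsL a γ) q) :=
    ⟨σ a q, by rintro _ ⟨γ, rfl⟩; exact hge γ⟩
  have hle : (⨅ γ : Γ, splus' (clsL a γ) q) ≤ σ a q := by
    refine le_trans (ciInf_le hbdd γ0) ?_
    rw [hspec]
    have : (⨅ s : S, σ (smul a γ0 s) q) ≤ σ (smul a γ0 f) q :=
      ciInf_le ⟨0, by rintro _ ⟨s, rfl⟩; exact h0 _ _⟩ f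
    rwa [hru] at this
  exact le_antisymm hle (le_ciInf hge)
end

section
/- Let S be a Γ-semigroup with unities, L its left operator semigroup with left unity [e,δ], and Q a non-empty set. For every Q-fuzzy ideal μ of L, (μ⁺)⁺′ = μ. -/
/-- if L, the left operator semigroup of a Γ-semigroup S, has a
left unity [e,δ₀], then (μ⁺)⁺′ = μ for every Q-fuzzy ideal μ of L. -/
theorem stmt_13 {S Γ Q L : Type*} [Nonempty S] [Nonempty Γ] [Nonempty Q]
    (smul : S → Γ → S → S)
    (assoc1 : ∀ (a : S) (α : Γ) (b : S) (β : Γ) (c : S),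
      smul (smul a α b) β c = smul a α (smul b β c))
    (clsL : S → Γ → L) (mulL : L → L → L)
    (hmul : ∀ (x : S) (α : Γ) (y : S) (β : Γ),
      mulL (clsL x α) (clsL y β) = clsL (smul x α y) β)
    (hclseq : ∀ (x : S) (α : Γ) (y : S) (β : Γ),
      (∀ s : S, smul x α s = smul y β s) → clsL x α = clsL y β)
    (hsurj : ∀ u : L, ∃ (x : S) (α : Γ), u = clsL x α)
    (e : S) (δ0 : Γ) (hlu : ∀ s : S, smul e δ0 s = s)
    (μ : L → Q → ℝ) (h0 : ∀ u q, 0 ≤ μ u q) (h1 : ∀ u q, μ u q ≤ 1)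
    (hid : ∀ (u v : L) (q : Q), max (μ u q) (μ v q) ≤ μ (mulL u v) q) :
    ∀ (x : S) (α : Γ) (q : Q),
      (⨅ s : S, ⨅ γ : Γ, μ (clsL (smul x α s) γ) q) = μ (clsL x α) q := by
  intro x α q
  have hbdd : ∀ γ0 : Γ, BddBelow (Set.range fun γ : Γ => μ (clsL (smul x α e) γ) q) :=
    fun γ0 => ⟨0, by rintro _ ⟨γ, rfl⟩; exact h0 _ _⟩
  apply le_antisymm
  · have key : clsL (smul x α e) δ0 = clsL x α := by
      apply hclseq
      intro s
      rw [assoc1, hlu]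
    calc (⨅ s : S, ⨅ γ : Γ, μ (clsL (smul x α s) γ) q)
        ≤ ⨅ γ : Γ, μ (clsL (smul x α e) γ) q := by
          apply ciInf_le _ e
          exact ⟨0, by rintro _ ⟨s, rfl⟩; exact le_ciInf fun γ => h0 _ _⟩
      _ ≤ μ (clsL (smul x α e) δ0) q := ciInf_le (hbdd δ0) δ0
      _ = μ (clsL x α) q := by rw [key]
  · refine le_ciInf fun s => le_ciInf fun γ => ?_
    have := hid (clsL x α) (clsL s γ) q
    rw [hmul] at this
    exact le_trans (le_max_left _ _) this
end

section
/- Let S be a Γ-semigroup with unities, Q a non-empty set, and R its right operator semigroup. If μ is a Q-fuzzy ideal of R, then μ* defined by μ*(a,q) = inf over γ∈Γ of μ([γ,a],q) is a Q-fuzzy ideal of S. -/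
/-- if μ is a Q-fuzzy ideal of the right operator semigroup R of a
Γ-semigroup S with unities, then μ* is a Q-fuzzy ideal of S. -/
theorem stmt_15 {S Γ Q R : Type*} [Nonempty S] [Nonempty Γ] [Nonempty Q]
    (smul : S → Γ → S → S) (gmul : Γ → S → Γ → Γ)
    (assoc1 : ∀ (a : S) (α : Γ) (b : S) (β : Γ) (c : S),
      smul (smul a α b) β c = smul a α (smul b β c))
    (clsR : Γ → S → R) (mulR : R → R → R)
    (hmul : ∀ (α : Γ) (a : S) (β : Γ) (b : S),
      mulR (clsR α a) (clsR β b) = clsR (gmul α a β) b)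
    (hkey : ∀ (γ : Γ) (x : S) (α : Γ) (y : S),
      clsR γ (smul x α y) = mulR (clsR γ x) (clsR α y))
    (μ : R → Q → ℝ) (h0 : ∀ r q, 0 ≤ μ r q) (h1 : ∀ r q, μ r q ≤ 1)
    (hid : ∀ (u v : R) (q : Q), max (μ u q) (μ v q) ≤ μ (mulR u v) q) :
    ∀ (x y : S) (γ : Γ) (q : Q),
      max (⨅ γ' : Γ, μ (clsR γ' x) q) (⨅ γ' : Γ, μ (clsR γ' y) q) ≤
        ⨅ γ' : Γ, μ (clsR γ' (smul x γ y)) q := by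
  intro x y γ q
  apply le_ciInf
  intro γ'
  rw [hkey]
  refine le_trans (max_le_max ?_ ?_) (hid _ _ q)
  · exact ciInf_le ⟨0, fun r ⟨i, hi⟩ => hi ▸ h0 _ _⟩ γ'
  · exact ciInf_le ⟨0, fun r ⟨i, hi⟩ => hi ▸ h0 _ _⟩ γ
end

section
/- Let S be a Γ-semigroup with unities, Q a non-empty set, and R its right operator semigroup. If σ is a Q-fuzzy ideal of S, then σ*′ defined by σ*′([α,x],q) = inf over s∈S of σ(sαx,q) is a Q-fuzzy ideal of R. -/
/-- if σ is a Q-fuzzy ideal of a Γ-semigroup S with unities, then σ*′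
is a Q-fuzzy ideal of the right operator semigroup R. -/
theorem stmt_16 {S Γ Q R : Type*} [Nonempty S] [Nonempty Γ] [Nonempty Q]
    (smul : S → Γ → S → S) (gmul : Γ → S → Γ → Γ)
    (assoc1 : ∀ (a : S) (α : Γ) (b : S) (β : Γ) (c : S),
      smul (smul a α b) β c = smul a α (smul b β c))
    (assoc2 : ∀ (s : S) (α : Γ) (a : S) (β : Γ) (b : S),
      smul s (gmul α a β) b = smul (smul s α a) β b)
    (clsR : Γ → S → R) (mulR : R → R → R)
    (hmul : ∀ (α : Γ) (a : S) (β : Γ) (b : S),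
      mulR (clsR α a) (clsR β b) = clsR (gmul α a β) b)
    (hsurj : ∀ r : R, ∃ (α : Γ) (a : S), r = clsR α a)
    (σ : S → Q → ℝ) (h0 : ∀ x q, 0 ≤ σ x q) (h1 : ∀ x q, σ x q ≤ 1)
    (hid : ∀ (x y : S) (γ : Γ) (q : Q), max (σ x q) (σ y q) ≤ σ (smul x γ y) q)
    (sstar : R → Q → ℝ)
    (hspec : ∀ (α : Γ) (x : S) (q : Q),
      sstar (clsR α x) q = ⨅ s : S, σ (smul s α x) q) :
    ∀ (u v : R) (q : Q), max (sstar u q) (sstar v q) ≤ sstar (mulR u v) q := by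
  intro u v q
  obtain ⟨α, a, rfl⟩ := hsurj u
  obtain ⟨β, b, rfl⟩ := hsurj v
  rw [hmul, hspec, hspec, hspec]
  have hbdd : ∀ (γ : Γ) (x : S), BddBelow (Set.range fun s => σ (smul s γ x) q) :=
    fun γ x => ⟨0, by rintro _ ⟨s, rfl⟩; exact h0 _ q⟩
  refine max_le (le_ciInf fun s => ?_) (le_ciInf fun s => ?_)
  · calc (⨅ t : S, σ (smul t α a) q) ≤ σ (smul s α a) q := ciInf_le (hbdd α a) s
      _ ≤ σ (smul (smul s α a) β b) q := le_trans (le_max_left _ (σ b q)) (hid _ _ _ _)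
      _ = σ (smul s (gmul α a β) b) q := (congrArg (σ · q) (assoc2 s α a β b)).symm
  · calc (⨅ t : S, σ (smul t β b) q) ≤ σ (smul (smul s α a) β b) q := ciInf_le (hbdd β b) _
      _ = σ (smul s (gmul α a β) b) q := (congrArg (σ · q) (assoc2 s α a β b)).symm
end
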